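/- arXiv:2507.01847 — 3 statements merged into one kernel-verified Lean document; each statement's English description precedes it below -/
import Mathlib

section
/- Let A be a densely defined closed C-symmetric operator and B = CAC. In the graph-norm Hilbert space H_{B*} (domain of B* with inner product ⟨f,g⟩ + ⟨B*f, B*g⟩), the orthogonal complement of D(A) equals the kernel N(I + A*B*) = N(I + A*CA*C). -/
open scoped InnerProductSpace
open LinearPMap

variable {H : Type*} [NormedAddCommGroup H] [InnerProductSpace ℂ H]

/-- A conjugation on a complex inner product space: a conjugate-linear involution
satisfying `⟪Cx, Cy⟫ = ⟪y, x⟫`. -/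
structure Conjugation (H : Type*) [NormedAddCommGroup H] [InnerProductSpace ℂ H] where
  toFun : H → H
  map_add' : ∀ x y, toFun (x + y) = toFun x + toFun y
  map_smulc : ∀ (c : ℂ) (x : H), toFun (c • x) = (starRingEnd ℂ c) • toFun x
  invol : ∀ x, toFun (toFun x) = x
  inner_conj : ∀ x y, ⟪toFun x, toFun y⟫_ℂ = ⟪y, x⟫_ℂ

namespace Conjugation

instance : CoeFun (Conjugation H) fun _ => H → H := ⟨toFun⟩

lemma map_zero (C : Conjugation H) : C 0 = 0 := by
  have := C.map_smulc 0 0; simpa using this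

lemma mem_of_mem_image (C : Conjugation H) {S : Set H} {x : H} (hx : x ∈ C.toFun '' S) :
    C x ∈ S := by
  obtain ⟨t, ht, rfl⟩ := hx
  rwa [C.invol]

/-- The image `C(D)` of a subspace under a conjugation, as a subspace. -/
def conjDomain (C : Conjugation H) (D : Submodule ℂ H) : Submodule ℂ H where
  carrier := C.toFun '' (D : Set H)
  add_mem' := by
    rintro a b ⟨x, hx, rfl⟩ ⟨y, hy, rfl⟩
    exact ⟨x + y, D.add_mem hx hy, (C.map_add' x y).symm ▸ rfl⟩
  zero_mem' := ⟨0, D.zero_mem, C.map_zero⟩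
  smul_mem' := by
    rintro c a ⟨x, hx, rfl⟩
    refine ⟨(starRingEnd ℂ c) • x, D.smul_mem _ hx, ?_⟩
    rw [C.map_smulc]; simp

lemma conj_mem (C : Conjugation H) {D : Submodule ℂ H} {x : H} (hx : x ∈ C.conjDomain D) :
    C x ∈ D := C.mem_of_mem_image hx

/-- The operator `C T C` with domain `C(D(T))`. -/
noncomputable def conjOp (C : Conjugation H) (T : H →ₗ.[ℂ] H) : H →ₗ.[ℂ] H where
  domain := C.conjDomain T.domain
  toFun :=
  { toFun := fun x => C (T ⟨C ↑x, C.conj_mem x.2⟩)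
    map_add' := by
      intro x y
      have h : (⟨C ↑(x + y), C.conj_mem (x + y).2⟩ : T.domain)
          = ⟨C ↑x, C.conj_mem x.2⟩ + ⟨C ↑y, C.conj_mem y.2⟩ := by
        apply Subtype.ext; simp [C.map_add']
      try dsimp only
      rw [h, T.map_add, C.map_add']
    map_smul' := by
      intro c x
      have h : (⟨C ↑(c • x), C.conj_mem (c • x).2⟩ : T.domain)
          = (starRingEnd ℂ c) • (⟨C ↑x, C.conj_mem x.2⟩ : T.domain) := by
        apply Subtype.ext; simp [C.map_smulc]
      try dsimp only
      rw [h, T.map_smul, C.map_smulc]; simp }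

/-- `A` is `C`-symmetric: `CAC ⊆ A*`. -/
noncomputable def IsCSymmetric [CompleteSpace H] (C : Conjugation H) (A : H →ₗ.[ℂ] H) : Prop :=
  C.conjOp A ≤ A†

/-- `A` is `C`-self-adjoint: `CAC = A*`. -/
noncomputable def IsCSelfAdjoint [CompleteSpace H] (C : Conjugation H) (A : H →ₗ.[ℂ] H) : Prop :=
  C.conjOp A = A†

end Conjugation
variable [CompleteSpace H]

open scoped InnerProductSpace in
/-- The kernel `N(I + A*CA*C)`. -/
noncomputable def kerIplusAstarCAstarC (C : Conjugation H) (A : H →ₗ.[ℂ] H) : Set H :=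
  {g | ∃ hg : g ∈ (C.conjOp (A†)).domain, ∃ h2 : (C.conjOp (A†)) ⟨g, hg⟩ ∈ (A†).domain,
      g + A† ⟨(C.conjOp (A†)) ⟨g, hg⟩, h2⟩ = 0}

/-- The kernel `N(I + CA*CA*)`. -/
noncomputable def kerIplusCAstarCAstar (C : Conjugation H) (A : H →ₗ.[ℂ] H) : Set H :=
  {g | ∃ hg : g ∈ (A†).domain, ∃ h2 : A† ⟨g, hg⟩ ∈ (C.conjOp (A†)).domain,
      g + (C.conjOp (A†)) ⟨A† ⟨g, hg⟩, h2⟩ = 0}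

/-- The kernel `N(I + A*B*)` where `B = CAC`. -/
noncomputable def kerIplusAstarBstar (C : Conjugation H) (A : H →ₗ.[ℂ] H) : Set H :=
  {g | ∃ hg : g ∈ ((C.conjOp A)†).domain, ∃ h2 : (C.conjOp A)† ⟨g, hg⟩ ∈ (A†).domain,
      g + A† ⟨(C.conjOp A)† ⟨g, hg⟩, h2⟩ = 0}

open scoped InnerProductSpace in
/-- The orthogonal complement of `S` within `W`, with respect to the graph inner
product `⟪f, g⟫ + ⟪Tf, Tg⟫` of `T`. -/
def graphOrthComplIn (T : H →ₗ.[ℂ] H) (W S : Set H) : Set H :=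
  {g | g ∈ W ∧ ∃ hg : g ∈ T.domain, ∀ f ∈ S, ∀ hf : f ∈ T.domain,
      ⟪f, g⟫_ℂ + ⟪T ⟨f, hf⟩, T ⟨g, hg⟩⟫_ℂ = 0}

/-- The deficiency space `N(T* - μ)`. -/
noncomputable def defectSpace (T : H →ₗ.[ℂ] H) (μ : ℂ) : Submodule ℂ H where
  carrier := {z | ∃ hz : z ∈ (T†).domain, T† ⟨z, hz⟩ = μ • z}
  add_mem' := by
    rintro a b ⟨ha, hva⟩ ⟨hb, hvb⟩
    refine ⟨(T†).domain.add_mem ha hb, ?_⟩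
    have h : (⟨a + b, (T†).domain.add_mem ha hb⟩ : (T†).domain) = ⟨a, ha⟩ + ⟨b, hb⟩ := rfl
    rw [h, LinearPMap.map_add, hva, hvb, smul_add]
  zero_mem' := by
    refine ⟨(T†).domain.zero_mem, ?_⟩
    have h : (⟨(0 : H), (T†).domain.zero_mem⟩ : (T†).domain) = 0 := rfl
    rw [h, LinearPMap.map_zero, smul_zero]
  smul_mem' := by
    rintro c a ⟨ha, hva⟩
    refine ⟨(T†).domain.smul_mem c ha, ?_⟩
    have h : (⟨c • a, (T†).domain.smul_mem c ha⟩ : (T†).domain) = c • ⟨a, ha⟩ := rfl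
    rw [h, LinearPMap.map_smul, hva, smul_comm]


/-!
By `C`-symmetry `A ⊆ (CAC)* = B*`, so for `g ∈ D(B*)` and `f ∈ D(A)` the graph inner product is
`⟪f, g⟫ + ⟪Af, B*g⟫`. Its vanishing for all `f ∈ D(A)` says precisely that `B*g ∈ D(A*)` with
`A*B*g = -g`, i.e. `g ∈ N(I + A*B*)`; and `B* = CA*C`.
-/

namespace Conjugation

section

variable {E : Type*} [NormedAddCommGroup E] [InnerProductSpace ℂ E] (C : Conjugation E)

lemma map_neg (x : E) : C (-x) = -C x := by
  simpa using C.map_smulc (-1) x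

lemma map_sub (x y : E) : C (x - y) = C x - C y := by
  rw [sub_eq_add_neg, sub_eq_add_neg, C.map_add', C.map_neg]

lemma inner_map_left (x y : E) : ⟪C x, y⟫_ℂ = ⟪C y, x⟫_ℂ := by
  conv_lhs => rw [← C.invol y]
  rw [C.inner_conj]

lemma inner_map_right (x y : E) : ⟪x, C y⟫_ℂ = ⟪y, C x⟫_ℂ := by
  conv_lhs => rw [← C.invol x]
  rw [C.inner_conj]

lemma norm_map (x : E) : ‖C x‖ = ‖x‖ := by
  rw [norm_eq_sqrt_re_inner (𝕜 := ℂ), norm_eq_sqrt_re_inner (𝕜 := ℂ) x, C.inner_conj]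

lemma isometry : Isometry C.toFun :=
  Isometry.of_dist_eq fun x y => by
    rw [dist_eq_norm, dist_eq_norm, ← C.map_sub]
    exact C.norm_map _

lemma surjective : Function.Surjective C.toFun :=
  fun x => ⟨C x, C.invol x⟩

lemma mem_conjDomain_iff {D : Submodule ℂ E} {x : E} : x ∈ C.conjDomain D ↔ C x ∈ D :=
  ⟨C.conj_mem, fun h => ⟨C x, h, C.invol x⟩⟩

lemma conjOp_apply (T : E →ₗ.[ℂ] E) (x : (C.conjOp T).domain) :
    C.conjOp T x = C (T ⟨C x, C.conj_mem x.2⟩) := rfl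

lemma dense_conjOp_domain {T : E →ₗ.[ℂ] E} (hT : Dense (T.domain : Set E)) :
    Dense ((C.conjOp T).domain : Set E) :=
  C.surjective.denseRange.dense_image C.isometry.continuous hT

lemma conjOp_mono {S T : E →ₗ.[ℂ] E} (h : S ≤ T) : C.conjOp S ≤ C.conjOp T :=
  ⟨fun _ hx => C.mem_conjDomain_iff.mpr (h.1 (C.conj_mem hx)),
    fun _ _ hxy => congrArg C.toFun (h.2 (congrArg C.toFun hxy))⟩

@[simp]
lemma conjOp_conjOp (T : E →ₗ.[ℂ] E) : C.conjOp (C.conjOp T) = T := by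
  have hdom : (C.conjOp (C.conjOp T)).domain = T.domain := by
    ext x
    change x ∈ C.conjDomain (C.conjDomain T.domain) ↔ _
    rw [C.mem_conjDomain_iff, C.mem_conjDomain_iff, C.invol]
  refine LinearPMap.ext hdom fun x _ _ => ?_
  rw [C.conjOp_apply, C.conjOp_apply, C.invol]
  congr 1
  exact Subtype.ext (C.invol x)

variable [CompleteSpace E]

lemma conjOp_adjoint_le {T : E →ₗ.[ℂ] E} (hT : Dense (T.domain : Set E)) :
    C.conjOp (T†) ≤ (C.conjOp T)† := by
  refine IsFormalAdjoint.le_adjoint (C.dense_conjOp_domain hT) fun x y => ?_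
  rw [C.conjOp_apply, C.conjOp_apply, C.inner_map_left, C.inner_map_right]
  exact (adjoint_isFormalAdjoint hT ⟨C y, C.conj_mem y.2⟩ ⟨C x, C.conj_mem x.2⟩).symm

/-- One inclusion is formal; the other is the same inclusion for `CTC`, conjugated back by `C`. -/
lemma conjOp_adjoint {T : E →ₗ.[ℂ] E} (hT : Dense (T.domain : Set E)) :
    (C.conjOp T)† = C.conjOp (T†) := by
  refine le_antisymm ?_ (C.conjOp_adjoint_le hT)
  have h := C.conjOp_mono (C.conjOp_adjoint_le (C.dense_conjOp_domain hT))
  rwa [conjOp_conjOp, conjOp_conjOp] at h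

lemma IsCSymmetric.le_adjoint_conjOp {A : E →ₗ.[ℂ] E} (hA : Dense (A.domain : Set E))
    (hsym : C.IsCSymmetric A) : A ≤ (C.conjOp A)† := by
  rw [C.conjOp_adjoint hA]
  simpa using C.conjOp_mono hsym

end

end Conjugation

section

variable {E : Type*} [NormedAddCommGroup E] [InnerProductSpace ℂ E]

lemma inner_add_inner_eq_zero_iff (f g u w : E) :
    ⟪f, g⟫_ℂ + ⟪u, w⟫_ℂ = 0 ↔ ⟪-g, f⟫_ℂ = ⟪w, u⟫_ℂ := by
  rw [inner_neg_left, ← inner_conj_symm f g, ← inner_conj_symm u w, neg_eq_iff_add_eq_zero,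
    ← (starRingEnd ℂ).map_add, map_eq_zero]

end

namespace LinearPMap

variable {E : Type*} [NormedAddCommGroup E] [InnerProductSpace ℂ E] [CompleteSpace E]

lemma exists_adjoint_apply_eq_iff {A : E →ₗ.[ℂ] E} (hA : Dense (A.domain : Set E)) (w v : E) :
    (∃ hw : w ∈ A†.domain, A† ⟨w, hw⟩ = v) ↔ ∀ x : A.domain, ⟪v, x⟫_ℂ = ⟪w, A x⟫_ℂ :=
  ⟨fun ⟨hw, hv⟩ x => hv ▸ adjoint_isFormalAdjoint hA ⟨w, hw⟩ x,
    fun h => ⟨mem_adjoint_domain_of_exists w ⟨v, h⟩, adjoint_apply_eq hA _ h⟩⟩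

lemma graphOrthComplIn_domain_eq {A T : E →ₗ.[ℂ] E} (hA : Dense (A.domain : Set E))
    (hAT : A ≤ T) :
    graphOrthComplIn T T.domain A.domain =
      {g | ∃ hg : g ∈ T.domain, ∃ hTg : T ⟨g, hg⟩ ∈ A†.domain, g + A† ⟨T ⟨g, hg⟩, hTg⟩ = 0} := by
  have horth_iff : ∀ g (hg : g ∈ T.domain),
      (∀ f ∈ A.domain, ∀ hf : f ∈ T.domain, ⟪f, g⟫_ℂ + ⟪T ⟨f, hf⟩, T ⟨g, hg⟩⟫_ℂ = 0) ↔
        ∃ hTg : T ⟨g, hg⟩ ∈ A†.domain, g + A† ⟨T ⟨g, hg⟩, hTg⟩ = 0 := by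
    intro g hg
    simp only [add_eq_zero_iff_eq_neg', exists_adjoint_apply_eq_iff hA,
      ← inner_add_inner_eq_zero_iff]
    have hTA : ∀ (x : A.domain) (hx : (x : E) ∈ T.domain), T ⟨x, hx⟩ = A x :=
      fun _ _ => (hAT.2 rfl).symm
    refine ⟨fun h x => ?_, fun h f hfA hf => ?_⟩
    · rw [← hTA x (hAT.1 x.2)]
      exact h x x.2 _
    · rw [hTA ⟨f, hfA⟩ hf]
      exact h ⟨f, hfA⟩
  ext g
  exact ⟨fun ⟨hg, _, horth⟩ => ⟨hg, (horth_iff g hg).1 horth⟩,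
    fun ⟨hg, hker⟩ => ⟨hg, hg, (horth_iff g hg).2 hker⟩⟩

end LinearPMap

theorem stmt_4_general (C : Conjugation H) (A : H →ₗ.[ℂ] H) (hA : Dense (A.domain : Set H))
    (hsym : C.IsCSymmetric A) :
    graphOrthComplIn ((C.conjOp A)†) (((C.conjOp A)†).domain : Set H) (A.domain : Set H)
      = kerIplusAstarBstar C A
    ∧ graphOrthComplIn ((C.conjOp A)†) (((C.conjOp A)†).domain : Set H) (A.domain : Set H)
      = kerIplusAstarCAstarC C A := by
  have hker := graphOrthComplIn_domain_eq hA (hsym.le_adjoint_conjOp C hA)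
  refine ⟨hker, hker.trans ?_⟩
  unfold kerIplusAstarCAstarC
  rw [C.conjOp_adjoint hA]

theorem stmt_4 (C : Conjugation H) (A : H →ₗ.[ℂ] H) (hA : Dense (A.domain : Set H))
    (hclosed : A.IsClosed) (hsym : C.IsCSymmetric A) :
    graphOrthComplIn ((C.conjOp A)†) (((C.conjOp A)†).domain : Set H) (A.domain : Set H)
      = kerIplusAstarBstar C A
    ∧ graphOrthComplIn ((C.conjOp A)†) (((C.conjOp A)†).domain : Set H) (A.domain : Set H)
      = kerIplusAstarCAstarC C A :=
  stmt_4_general C A hA hsym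
end

section
/- Let A be a densely defined closed C-symmetric operator and à a closed operator with A ⊆ à ⊆ B* where B = CAC. Writing D(Ã) = D(A) ⊕ L_{Ã} (orthogonal in H_{B*}) and D(Ã*) = D(B) ⊕ L_{Ã*} (orthogonal in H_{A*}), the subspace L_{Ã*} equals the orthogonal complement of B* L_{Ã} in M_{A*}. -/
open scoped InnerProductSpace
open LinearPMap

variable {H : Type*} [NormedAddCommGroup H] [InnerProductSpace ℂ H]

variable [CompleteSpace H]

/-!
Since `A` is closed, every `f ∈ D(Ã)` splits as `f₀ + h` with `f₀ ∈ D(A)` and `h ∈ L_Ã`: project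
`(f, Ã f)` onto the graph of `A`. For `h ∈ L_Ã`, graph orthogonality to `D(A)` says precisely that
`B* h ∈ D(A*)` with `A* B* h = -h`, so for `g ∈ D(A*)` the graph inner product of `B* h` and `g`
is `⟪B* h, g⟫ - ⟪h, A* g⟫`. By the splitting, its vanishing for all `h ∈ L_Ã` is equivalent to
`⟪Ã f, g⟫ = ⟪f, A* g⟫` for all `f ∈ D(Ã)`, that is, to `g ∈ D(Ã*)`.
-/

section Adjoint

variable {𝕜 E F : Type*} [RCLike 𝕜]
  [NormedAddCommGroup E] [InnerProductSpace 𝕜 E] [NormedAddCommGroup F] [InnerProductSpace 𝕜 F]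

namespace LinearPMap

theorem IsFormalAdjoint.mono {T T' : E →ₗ.[𝕜] F} {S S' : F →ₗ.[𝕜] E} (h : T.IsFormalAdjoint S)
    (hT : T' ≤ T) (hS : S' ≤ S) : T'.IsFormalAdjoint S' := fun x y => by
  rw [hT.2 (y := ⟨x, hT.1 x.2⟩) rfl, hS.2 (y := ⟨y, hS.1 y.2⟩) rfl]
  exact h ⟨x, _⟩ ⟨y, _⟩

variable [CompleteSpace E] {T S : E →ₗ.[𝕜] F}

theorem adjoint_le_adjoint (hT : Dense (T.domain : Set E)) (h : T ≤ S) : S† ≤ T† :=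
  ((adjoint_isFormalAdjoint (hT.mono h.1)).mono le_rfl h).symm.le_adjoint hT

theorem exists_adjoint_apply_eq (hT : Dense (T.domain : Set E)) {y : F} {w : E}
    (h : ∀ x : T.domain, ⟪w, x⟫_𝕜 = ⟪y, T x⟫_𝕜) : ∃ hy : y ∈ T†.domain, T† ⟨y, hy⟩ = w :=
  have hy := mem_adjoint_domain_of_exists y ⟨w, h⟩
  ⟨hy, adjoint_apply_eq hT ⟨y, hy⟩ h⟩

variable [CompleteSpace F]

theorem IsClosed.exists_graph_inner_sub_eq_zero (hT : T.IsClosed) (u : E) (v : F) :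
    ∃ f₀ : T.domain, ∀ x : T.domain, ⟪(x : E), u - f₀⟫_𝕜 + ⟪T x, v - T f₀⟫_𝕜 = 0 := by
  set G : Submodule 𝕜 (WithLp 2 (E × F)) :=
    T.graph.comap (WithLp.linearEquiv 2 𝕜 (E × F)).toLinearMap
  have : CompleteSpace G :=
    (hT.preimage (WithLp.prod_continuous_ofLp 2 E F)).completeSpace_coe
  obtain ⟨p, hp, q, hq, hpq⟩ := G.exists_add_mem_mem_orthogonal (WithLp.toLp 2 (u, v))
  obtain ⟨f₀, hf₀, hTf₀⟩ := T.mem_graph_iff.1 (Submodule.mem_comap.1 hp)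
  refine ⟨f₀, fun x => ?_⟩
  have hq' : WithLp.ofLp q = (u - f₀, v - T f₀) := by
    rw [eq_sub_of_add_eq' hpq.symm, WithLp.ofLp_sub]
    exact Prod.ext (congrArg (u - ·) hf₀.symm) (congrArg (v - ·) hTf₀.symm)
  have hxG : WithLp.toLp 2 ((x : E), T x) ∈ G := T.mem_graph x
  simpa [hq'] using (G.mem_orthogonal q).1 hq _ hxG

end LinearPMap

end Adjoint

section GraphOrthogonal

variable {T S R : H →ₗ.[ℂ] H}

theorem exists_adjoint_apply_eq_neg_of_mem_graphOrthComplIn (hT : Dense (T.domain : Set H))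
    (hTR : T ≤ R) {W : Set H} {h : H} (hL : h ∈ graphOrthComplIn R W T.domain)
    (hR : h ∈ R.domain) : ∃ hy : R ⟨h, hR⟩ ∈ T†.domain, T† ⟨R ⟨h, hR⟩, hy⟩ = -h := by
  have horth := hL.2.2
  refine exists_adjoint_apply_eq hT fun x => ?_
  have hx := horth x x.2 (hTR.1 x.2)
  rw [← hTR.2 (x := x) rfl] at hx
  calc ⟪-h, (x : H)⟫_ℂ = -starRingEnd ℂ ⟪(x : H), h⟫_ℂ := by rw [inner_neg_left, inner_conj_symm]
    _ = starRingEnd ℂ ⟪T x, R ⟨h, hR⟩⟫_ℂ := by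
      rw [eq_neg_of_add_eq_zero_left hx, _root_.map_neg, neg_neg]
    _ = ⟪R ⟨h, hR⟩, T x⟫_ℂ := inner_conj_symm _ _

theorem graph_inner_adjoint_eq_zero_iff (hT : Dense (T.domain : Set H)) (hTR : T ≤ R) {W : Set H}
    {h g : H} (hL : h ∈ graphOrthComplIn R W T.domain) (hR : h ∈ R.domain)
    (hg : g ∈ T†.domain) :
    (∀ hy : R ⟨h, hR⟩ ∈ T†.domain, ⟪R ⟨h, hR⟩, g⟫_ℂ + ⟪T† ⟨_, hy⟩, T† ⟨g, hg⟩⟫_ℂ = 0) ↔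
      ⟪T† ⟨g, hg⟩, h⟫_ℂ = ⟪g, R ⟨h, hR⟩⟫_ℂ := by
  obtain ⟨hy, hTRh⟩ := exists_adjoint_apply_eq_neg_of_mem_graphOrthComplIn hT hTR hL hR
  rw [forall_prop_of_true hy, hTRh, inner_neg_left, ← sub_eq_add_neg, sub_eq_zero,
    ← inner_conj_symm g, ← inner_conj_symm (T† ⟨g, hg⟩), (RingHom.injective _).eq_iff, eq_comm]

theorem inner_eq_of_forall_mem_graphOrthComplIn (hT : T.IsClosed) (hTS : T ≤ S) (hSR : S ≤ R)
    {g w : H} (hgT : ∀ x : T.domain, ⟪w, x⟫_ℂ = ⟪g, T x⟫_ℂ)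
    (hgL : ∀ h ∈ graphOrthComplIn R S.domain T.domain, ∀ hR : h ∈ R.domain,
      ⟪w, h⟫_ℂ = ⟪g, R ⟨h, hR⟩⟫_ℂ)
    (f : S.domain) : ⟪w, f⟫_ℂ = ⟪g, S f⟫_ℂ := by
  obtain ⟨f₀, hf₀⟩ := hT.exists_graph_inner_sub_eq_zero (f : H) (S f)
  set h : S.domain := f - ⟨f₀, hTS.1 f₀.2⟩ with hh
  have hRh : R ⟨h, hSR.1 h.2⟩ = S f - T f₀ := by
    rw [← hSR.2 (x := h) rfl, hh, LinearPMap.map_sub, hTS.2 (y := ⟨f₀, hTS.1 f₀.2⟩) rfl]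
  have hL : (h : H) ∈ graphOrthComplIn R S.domain T.domain := by
    refine ⟨h.2, hSR.1 h.2, fun x hx hxR => ?_⟩
    rw [hRh, ← (hTS.trans hSR).2 (x := ⟨x, hx⟩) rfl]
    exact hf₀ ⟨x, hx⟩
  calc ⟪w, f⟫_ℂ = ⟪w, f₀⟫_ℂ + ⟪w, h⟫_ℂ := by rw [← inner_add_right]; simp [h]
    _ = ⟪g, T f₀⟫_ℂ + ⟪g, R ⟨h, hSR.1 h.2⟩⟫_ℂ := by rw [hgT, hgL _ hL]
    _ = ⟪g, S f⟫_ℂ := by rw [hRh, ← inner_add_right, add_sub_cancel]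

theorem mem_adjoint_domain_iff_forall_mem_graphOrthComplIn (hT : Dense (T.domain : Set H))
    (hTc : T.IsClosed) (hTS : T ≤ S) (hSR : S ≤ R) {g : H} (hg : g ∈ T†.domain) :
    g ∈ S†.domain ↔ ∀ h ∈ graphOrthComplIn R S.domain T.domain, ∀ hR : h ∈ R.domain,
      ⟪T† ⟨g, hg⟩, h⟫_ℂ = ⟪g, R ⟨h, hR⟩⟫_ℂ := by
  refine ⟨fun hgS h hL hR => ?_, fun hgL => ?_⟩
  · have hTg : T† ⟨g, hg⟩ = S† ⟨g, hgS⟩ := ((adjoint_le_adjoint hT hTS).2 rfl).symm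
    rw [hTg, adjoint_isFormalAdjoint (hT.mono hTS.1) ⟨g, hgS⟩ ⟨h, hL.1⟩,
      hSR.2 (x := ⟨h, hL.1⟩) (y := ⟨h, hR⟩) rfl]
  · exact mem_adjoint_domain_of_exists g ⟨T† ⟨g, hg⟩,
      inner_eq_of_forall_mem_graphOrthComplIn hTc hTS hSR (adjoint_isFormalAdjoint hT ⟨g, hg⟩) hgL⟩

end GraphOrthogonal

theorem stmt_8_general (C : Conjugation H) (A Atil : H →ₗ.[ℂ] H) (hA : Dense (A.domain : Set H))
    (hclosedA : A.IsClosed) (h1 : A ≤ Atil) (h2 : Atil ≤ (C.conjOp A)†) :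
    graphOrthComplIn (A†) (((Atil†).domain : Set H)) ((C.conjOp A).domain : Set H)
      = graphOrthComplIn (A†)
          (graphOrthComplIn (A†) (((A†).domain : Set H)) ((C.conjOp A).domain : Set H))
          {x : H | ∃ g ∈ graphOrthComplIn ((C.conjOp A)†) ((Atil.domain : Set H))
              ((A.domain : Set H)),
            ∃ hg : g ∈ ((C.conjOp A)†).domain, (C.conjOp A)† ⟨g, hg⟩ = x} := by
  have hAR : A ≤ (C.conjOp A)† := h1.trans h2
  ext g
  constructor
  · rintro ⟨hgAtil, hgA, horth⟩
    refine ⟨⟨hgA, hgA, horth⟩, hgA, ?_⟩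
    rintro _ ⟨h, hL, hR, rfl⟩
    exact (graph_inner_adjoint_eq_zero_iff hA hAR hL hR hgA).2 <|
      (mem_adjoint_domain_iff_forall_mem_graphOrthComplIn hA hclosedA h1 h2 hgA).1 hgAtil h hL hR
  · rintro ⟨⟨-, hgA, horth⟩, hgA', hgL⟩
    refine ⟨(mem_adjoint_domain_iff_forall_mem_graphOrthComplIn hA hclosedA h1 h2 hgA').2
      fun h hL hR => ?_, hgA, horth⟩
    exact (graph_inner_adjoint_eq_zero_iff hA hAR hL hR hgA').1 (hgL _ ⟨h, hL, hR, rfl⟩)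

theorem stmt_8 (C : Conjugation H) (A Atil : H →ₗ.[ℂ] H) (hA : Dense (A.domain : Set H))
    (hclosedA : A.IsClosed) (hsym : C.IsCSymmetric A) (hclosed : Atil.IsClosed)
    (h1 : A ≤ Atil) (h2 : Atil ≤ (C.conjOp A)†) :
    graphOrthComplIn (A†) (((Atil†).domain : Set H)) ((C.conjOp A).domain : Set H)
      = graphOrthComplIn (A†)
          (graphOrthComplIn (A†) (((A†).domain : Set H)) ((C.conjOp A).domain : Set H))
          {x : H | ∃ g ∈ graphOrthComplIn ((C.conjOp A)†) ((Atil.domain : Set H))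
              ((A.domain : Set H)),
            ∃ hg : g ∈ ((C.conjOp A)†).domain, (C.conjOp A)† ⟨g, hg⟩ = x} :=
  stmt_8_general C A Atil hA hclosedA h1 h2
end

section
/- If S is an anti-unitary anti-involution (conjugate-linear, norm-preserving, S² = −I) on a Hilbert space H, then there exists a closed subspace H₀ of H such that H = H₀ ⊕ S H₀ is an orthogonal decomposition. -/
open scoped InnerProductSpace
open LinearPMap

variable {H : Type*} [NormedAddCommGroup H] [InnerProductSpace ℂ H]

variable [CompleteSpace H]

/-!
The identity `⟪x, S y⟫ = -⟪y, S x⟫` gives `⟪z, S z⟫ = 0`, so a vector `z ⟂ S M` can always be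
adjoined to a subspace `M ⟂ S M`. Hence a maximal such `M` (Zorn) satisfies `M = (S M)ᗮ`, which
makes it closed, and applying the anti-unitary `S` turns this into `Mᗮ = S M`,
so `H = M ⊕ S M`.
-/

namespace AntiInvolution

variable {E : Type*} [NormedAddCommGroup E] [InnerProductSpace ℂ E] {S : E →ₗ⋆[ℂ] E}

theorem inner_apply_eq_neg_inner_apply (hinner : ∀ x y, ⟪S x, S y⟫_ℂ = ⟪y, x⟫_ℂ)
    (hinv : ∀ x, S (S x) = -x) (x y : E) : ⟪x, S y⟫_ℂ = -⟪y, S x⟫_ℂ := by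
  have h := congrArg (starRingEnd ℂ) (hinner y (S x))
  rw [hinv, inner_neg_right, _root_.map_neg, inner_conj_symm, inner_conj_symm] at h
  linear_combination -h

theorem inner_self_apply_eq_zero (hinner : ∀ x y, ⟪S x, S y⟫_ℂ = ⟪y, x⟫_ℂ)
    (hinv : ∀ x, S (S x) = -x) (x : E) : ⟪x, S x⟫_ℂ = 0 := by
  linear_combination inner_apply_eq_neg_inner_apply hinner hinv x x / 2

theorem exists_maximal_isOrtho_map (S : E →ₗ⋆[ℂ] E) :
    ∃ M : Submodule ℂ E, Maximal (fun M ↦ M ⟂ M.map S) M := by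
  refine zorn_le₀ {M | M ⟂ M.map S} fun c hc hchain ↦ ⟨sSup c, ?_, fun _ ↦ le_sSup⟩
  rw [Set.mem_ofPred_eq, sSup_eq_iSup', Submodule.map_iSup, Submodule.isOrtho_iSup_left]
  rintro ⟨M₁, h₁⟩
  rw [Submodule.isOrtho_iSup_right]
  rintro ⟨M₂, h₂⟩
  rcases hchain.total h₁ h₂ with h | h
  · exact (hc h₂).mono_left h
  · exact (hc h₁).mono_right (Submodule.map_mono h)

theorem isOrtho_map_sup_span_singleton (hinner : ∀ x y, ⟪S x, S y⟫_ℂ = ⟪y, x⟫_ℂ)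
    (hinv : ∀ x, S (S x) = -x) {M : Submodule ℂ E} (hM : M ⟂ M.map S) {z : E}
    (hz : z ∈ (M.map S)ᗮ) : M ⊔ ℂ ∙ z ⟂ (M ⊔ ℂ ∙ z).map S := by
  rw [Submodule.map_sup, Submodule.map_span, Set.image_singleton, Submodule.isOrtho_sup_left,
    Submodule.isOrtho_sup_right, Submodule.isOrtho_sup_right]
  have hSz : S z ∈ Mᗮ := fun u hu ↦ by
    rw [inner_apply_eq_neg_inner_apply hinner hinv,
      Submodule.inner_left_of_mem_orthogonal (Submodule.mem_map_of_mem hu) hz, neg_zero]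
  refine ⟨⟨hM, ?_⟩, ?_, ?_⟩
  · exact (Submodule.isOrtho_iff_le.mpr ((Submodule.span_singleton_le_iff_mem _ _).mpr hSz)).symm
  · exact Submodule.isOrtho_iff_le.mpr ((Submodule.span_singleton_le_iff_mem _ _).mpr hz)
  · simp [Submodule.isOrtho_span, inner_self_apply_eq_zero hinner hinv]

theorem orthogonal_map_eq_of_maximal (hinner : ∀ x y, ⟪S x, S y⟫_ℂ = ⟪y, x⟫_ℂ)
    (hinv : ∀ x, S (S x) = -x) {M : Submodule ℂ E} (hM : Maximal (fun M ↦ M ⟂ M.map S) M) :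
    (M.map S)ᗮ = M :=
  le_antisymm
    (fun z hz ↦ hM.2 (isOrtho_map_sup_span_singleton hinner hinv hM.1 hz) le_sup_left
      (Submodule.mem_sup_right (Submodule.mem_span_singleton_self z)))
    hM.1.le

theorem orthogonal_eq_map_of_orthogonal_map_eq (hinner : ∀ x y, ⟪S x, S y⟫_ℂ = ⟪y, x⟫_ℂ)
    (hinv : ∀ x, S (S x) = -x) {M : Submodule ℂ E} (hM : (M.map S)ᗮ = M) :
    Mᗮ = M.map S := by
  refine le_antisymm (fun z hz ↦ ?_) ?_
  · have hSz : S z ∈ M := by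
      rw [← hM]
      rintro _ ⟨x, hx, rfl⟩
      rw [hinner, Submodule.inner_left_of_mem_orthogonal hx hz]
    exact ⟨-S z, M.neg_mem hSz, by rw [_root_.map_neg, hinv, neg_neg]⟩
  · simpa only [hM] using (Submodule.isOrtho_orthogonal_left (M.map S)).ge

end AntiInvolution

open AntiInvolution

theorem stmt_12_general (S : H → H)
    (hadd : ∀ x y, S (x + y) = S x + S y)
    (hsmul : ∀ (c : ℂ) (x : H), S (c • x) = (starRingEnd ℂ) c • S x)
    (hinner : ∀ x y, ⟪S x, S y⟫_ℂ = ⟪y, x⟫_ℂ)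
    (hinv : ∀ x, S (S x) = -x) :
    ∃ H₀ : Submodule ℂ H, IsClosed (H₀ : Set H)
      ∧ (∀ x ∈ H₀, ∀ y ∈ H₀, ⟪x, S y⟫_ℂ = 0)
      ∧ ∀ z : H, ∃ x ∈ H₀, ∃ y ∈ H₀, z = x + S y := by
  let T : H →ₗ⋆[ℂ] H := { toFun := S, map_add' := hadd, map_smul' := hsmul }
  obtain ⟨M, hM⟩ := exists_maximal_isOrtho_map T
  have hM_eq : (M.map T)ᗮ = M := orthogonal_map_eq_of_maximal hinner hinv hM
  have hM_orth : Mᗮ = M.map T := orthogonal_eq_map_of_orthogonal_map_eq hinner hinv hM_eq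
  have : CompleteSpace M := hM_eq ▸ inferInstance
  refine ⟨M, hM_eq ▸ Submodule.isClosed_orthogonal _,
    fun x hx y hy ↦ hM.1.inner_eq hx (Submodule.mem_map_of_mem hy), fun z ↦ ?_⟩
  have hz : z ∈ M ⊔ M.map T := by
    rw [← hM_orth, Submodule.sup_orthogonal_of_hasOrthogonalProjection]
    exact Submodule.mem_top
  obtain ⟨x, hx, _, ⟨y, hy, rfl⟩, rfl⟩ := Submodule.mem_sup.mp hz
  exact ⟨x, hx, y, hy, rfl⟩

theorem stmt_12 (S : H → H)
    (hadd : ∀ x y, S (x + y) = S x + S y)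
    (hsmul : ∀ (c : ℂ) (x : H), S (c • x) = (starRingEnd ℂ) c • S x)
    (hbij : Function.Bijective S)
    (hinner : ∀ x y, ⟪S x, S y⟫_ℂ = ⟪y, x⟫_ℂ)
    (hinv : ∀ x, S (S x) = -x) :
    ∃ H₀ : Submodule ℂ H, IsClosed (H₀ : Set H)
      ∧ (∀ x ∈ H₀, ∀ y ∈ H₀, ⟪x, S y⟫_ℂ = 0)
      ∧ ∀ z : H, ∃ x ∈ H₀, ∃ y ∈ H₀, z = x + S y :=
  stmt_12_general S hadd hsmul hinner hinv
end
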